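/- arXiv:2104.05500 — 3 statements merged into one kernel-verified Lean document; each statement's English description precedes it below -/
import Mathlib

section
/- Under thorough querying, any stepwise-optimal model is also sequence-optimal. Precisely: in the setting below, if the query sampling is thorough and the model (w_0, f̂_δ) is stepwise-optimal, then for every time t ≥ 1, every query q with S_{q,t} > 0, and every instruction history i_{1..t} with μ(I_{1..t} = i_{1..t}) > 0, one has μ(A_{q,t} | w_t = ŵ_t(i_{1..t})) = μ(A_{q,t} | I_{1..t} = i_{1..t}), where ŵ_t(i_{1..t}) denotes the deterministic value of w_t along the history i_{1..t}. -/
open MeasureTheory ProbabilityTheory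

variable {Ω 𝓘 𝓠 𝓦 : Type*}

/-- The event that the instruction history up to time `n` equals `i₁, …, iₙ`
(only the times `1 ≤ t ≤ n` matter). -/
def histEvent (I : ℕ → Ω → Finset 𝓘) (i : ℕ → Finset 𝓘) (n : ℕ) : Set Ω :=
  {ω | ∀ t, 1 ≤ t → t ≤ n → I t ω = i t}

/-- The random world states `w_t`, defined recursively from the fixed initial state `w0`
and the deterministic updater `fδ` by `w_t = fδ (w_{t-1}, I_t)`. -/
def wseq (w0 : 𝓦) (fδ : 𝓦 → Finset 𝓘 → 𝓦) (I : ℕ → Ω → Finset 𝓘) : ℕ → Ω → 𝓦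
  | 0 => fun _ => w0
  | t + 1 => fun ω => fδ (wseq w0 fδ I t ω) (I (t + 1) ω)

/-- The deterministic value `ŵ_t(i_{1..t})` of the world state along the fixed history `i`. -/
def detW (w0 : 𝓦) (fδ : 𝓦 → Finset 𝓘 → 𝓦) (i : ℕ → Finset 𝓘) : ℕ → 𝓦
  | 0 => w0
  | t + 1 => fδ (detW w0 fδ i t) (i (t + 1))

/-- `q` is a recall query, at query time `t'`, for the instruction `v` received at time
`t ≤ t'`: for every positive-probability instruction history `i_{1..t'}` with `v ∈ i_t`,
the answer to `q` at time `t'` is almost surely `True` given the history, and almost surely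
`False` given the history with `v` removed from `i_t` (whenever the latter conditioning
event has positive probability). -/
def IsRecallQuery [MeasurableSpace Ω] [DecidableEq 𝓘] (μ : Measure Ω)
    (I : ℕ → Ω → Finset 𝓘) (A : 𝓠 → ℕ → Set Ω) (q : 𝓠) (v : 𝓘) (t t' : ℕ) : Prop :=
  t ≤ t' ∧
  (∀ i : ℕ → Finset 𝓘, v ∈ i t → 0 < μ (histEvent I i t') →
      μ[A q t' | histEvent I i t'] = 1) ∧
  (∀ i : ℕ → Finset 𝓘, v ∈ i t →
      0 < μ (histEvent I (Function.update i t (i t \ {v})) t') →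
      μ[A q t' | histEvent I (Function.update i t (i t \ {v})) t'] = 0)

/-- The query sampling is thorough: for every positive-probability instruction history
`i_{1..n}`, every time `1 ≤ t ≤ n`, every instruction `v ∈ i_t`, and every `t' ≥ t`,
there is a recall query for `v` at times `(t, t')` with positive sampling probability. -/
def Thorough [MeasurableSpace Ω] [DecidableEq 𝓘] (μ : Measure Ω)
    (I : ℕ → Ω → Finset 𝓘) (A : 𝓠 → ℕ → Set Ω) (S : 𝓠 → ℕ → ℝ) : Prop :=
  ∀ (n : ℕ) (i : ℕ → Finset 𝓘), 0 < μ (histEvent I i n) →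
    ∀ t, 1 ≤ t → t ≤ n → ∀ v ∈ i t, ∀ t', t ≤ t' →
      ∃ q : 𝓠, IsRecallQuery μ I A q v t t' ∧ 0 < S q t'

/-- The model `(w0, fδ)` is stepwise-optimal: at every time `t + 1`, for every query with
positive sampling probability and every positive-probability pair (previous world state,
incoming instruction set), conditioning on the updated world state gives the same
probability as conditioning on the previous world state and the incoming instructions. -/
def StepwiseOptimal [MeasurableSpace Ω] (μ : Measure Ω)
    (I : ℕ → Ω → Finset 𝓘) (A : 𝓠 → ℕ → Set Ω) (S : 𝓠 → ℕ → ℝ)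
    (w0 : 𝓦) (fδ : 𝓦 → Finset 𝓘 → 𝓦) : Prop :=
  ∀ (t : ℕ) (q : 𝓠), 0 < S q (t + 1) →
    ∀ (w : 𝓦) (s : Finset 𝓘),
      0 < μ ({ω | wseq w0 fδ I t ω = w} ∩ {ω | I (t + 1) ω = s}) →
      μ[A q (t + 1) | {ω | wseq w0 fδ I (t + 1) ω = fδ w s}]
        = μ[A q (t + 1) | {ω | wseq w0 fδ I t ω = w} ∩ {ω | I (t + 1) ω = s}]


/-- Conditional measures agree on a.e.-equal conditioning events. -/
lemma cond_congr_ae' {Ω : Type*} [MeasurableSpace Ω] (μ : Measure Ω) {s t : Set Ω}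
    (h : s =ᵐ[μ] t) : ProbabilityTheory.cond μ s = ProbabilityTheory.cond μ t := by
  unfold ProbabilityTheory.cond
  rw [measure_congr h, Measure.restrict_congr_set h]

lemma histEvent_succ' (I : ℕ → Ω → Finset 𝓘) (i : ℕ → Finset 𝓘) (t : ℕ) :
    histEvent I i (t + 1) = histEvent I i t ∩ {ω | I (t + 1) ω = i (t + 1)} := by
  ext ω
  constructor
  · intro h
    exact ⟨fun s h1 h2 => h s h1 (by omega), h (t + 1) (by omega) le_rfl⟩
  · rintro ⟨h1, h2⟩ s hs1 hs2
    rcases Nat.lt_or_ge s (t + 1) with hlt | hge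
    · exact h1 s hs1 (by omega)
    · have hst : s = t + 1 := by omega
      subst hst; exact h2

lemma histEvent_anti' (I : ℕ → Ω → Finset 𝓘) (i : ℕ → Finset 𝓘) (t : ℕ) :
    histEvent I i (t + 1) ⊆ histEvent I i t :=
  fun ω h s h1 h2 => h s h1 (by omega)

lemma hist_subset_wseq' (w0 : 𝓦) (fδ : 𝓦 → Finset 𝓘 → 𝓦) (I : ℕ → Ω → Finset 𝓘)
    (i : ℕ → Finset 𝓘) : ∀ t : ℕ, ∀ ω, ω ∈ histEvent I i t →
      wseq w0 fδ I t ω = detW w0 fδ i t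
  | 0, ω, _ => rfl
  | t + 1, ω, h => by
      have h1 : wseq w0 fδ I t ω = detW w0 fδ i t :=
        hist_subset_wseq' w0 fδ I i t ω (histEvent_anti' I i t h)
      show fδ (wseq w0 fδ I t ω) (I (t + 1) ω) = fδ (detW w0 fδ i t) (i (t + 1))
      rw [h1, h (t + 1) (by omega) le_rfl]

/-- **Lemma (on thorough querying).** Under thorough querying, any stepwise-optimal model is
also sequence-optimal: for every time `t ≥ 1`, every query `q` with positive sampling
probability at time `t`, and every positive-probability instruction history `i_{1..t}`,
the probability of `A_{q,t}` conditioned on the world state `w_t` taking its deterministic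
value along the history equals its probability conditioned on the history itself. -/
theorem stepwiseOptimal_implies_sequenceOptimal
    [Countable Ω] [MeasurableSpace Ω] [MeasurableSingletonClass Ω]
    [Countable 𝓘] [DecidableEq 𝓘]
    (μ : Measure Ω) [IsProbabilityMeasure μ]
    (I : ℕ → Ω → Finset 𝓘) (A : 𝓠 → ℕ → Set Ω) (S : 𝓠 → ℕ → ℝ)
    (w0 : 𝓦) (fδ : 𝓦 → Finset 𝓘 → 𝓦)
    (hT : Thorough μ I A S)
    (hS : StepwiseOptimal μ I A S w0 fδ) :
    ∀ t : ℕ, 1 ≤ t → ∀ q : 𝓠, 0 < S q t → ∀ i : ℕ → Finset 𝓘,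
      0 < μ (histEvent I i t) →
      μ[A q t | {ω | wseq w0 fδ I t ω = detW w0 fδ i t}]
        = μ[A q t | histEvent I i t] := by
  -- key a.e. equality: the world-state event is a.e. contained in the history event
  have key : ∀ t : ℕ, ∀ i : ℕ → Finset 𝓘, 0 < μ (histEvent I i t) →
      μ ({ω | wseq w0 fδ I t ω = detW w0 fδ i t} \ histEvent I i t) = 0 := by
    intro t
    induction t with
    | zero =>
      intro i _
      have huniv : histEvent I i 0 = Set.univ := by
        ext ω
        simp only [histEvent, Set.mem_setOf_eq, Set.mem_univ, iff_true]
        intro s h1 h2; omega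
      rw [huniv, Set.diff_univ]
      exact measure_empty
    | succ t IH =>
      intro i hi
      have aeq : ∀ k : ℕ → Finset 𝓘, 0 < μ (histEvent I k t) →
          ({ω | wseq w0 fδ I t ω = detW w0 fδ k t} : Set Ω) =ᵐ[μ] (histEvent I k t : Set Ω) := by
        intro k hk
        refine MeasureTheory.ae_eq_set.2 ⟨IH k hk, ?_⟩
        have hsub : histEvent I k t \ {ω | wseq w0 fδ I t ω = detW w0 fδ k t} = ∅ :=
          Set.diff_eq_empty.2 (fun ω hω => hist_subset_wseq' w0 fδ I k t ω hω)
        rw [hsub]; exact measure_empty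
      have cstep : ∀ (k : ℕ → Finset 𝓘) (q : 𝓠), 0 < S q (t + 1) →
          0 < μ (histEvent I k (t + 1)) →
          μ[A q (t + 1) | {ω | wseq w0 fδ I (t + 1) ω = detW w0 fδ k (t + 1)}]
            = μ[A q (t + 1) | histEvent I k (t + 1)] := by
        intro k q hq hk
        have hkt : 0 < μ (histEvent I k t) :=
          lt_of_lt_of_le hk (measure_mono (histEvent_anti' I k t))
        have hsub : histEvent I k (t + 1) ⊆
            {ω | wseq w0 fδ I t ω = detW w0 fδ k t} ∩ {ω | I (t + 1) ω = k (t + 1)} := by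
          rw [histEvent_succ']
          exact Set.inter_subset_inter_left _
            (fun ω hω => hist_subset_wseq' w0 fδ I k t ω hω)
        have hpos : 0 < μ ({ω | wseq w0 fδ I t ω = detW w0 fδ k t}
            ∩ {ω | I (t + 1) ω = k (t + 1)}) :=
          lt_of_lt_of_le hk (measure_mono hsub)
        have hstep := hS t q hq (detW w0 fδ k t) (k (t + 1)) hpos
        have haeq : ({ω | wseq w0 fδ I t ω = detW w0 fδ k t}
              ∩ {ω | I (t + 1) ω = k (t + 1)} : Set Ω)
            =ᵐ[μ] (histEvent I k (t + 1) : Set Ω) := by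
          rw [histEvent_succ']
          exact ae_eq_set_inter (aeq k hkt) (ae_eq_refl _)
        rw [show detW w0 fδ k (t + 1) = fδ (detW w0 fδ k t) (k (t + 1)) from rfl,
          hstep, cond_congr_ae' μ haeq]
      have contra : ∀ a b : ℕ → Finset 𝓘, 0 < μ (histEvent I a (t + 1)) →
          0 < μ (histEvent I b (t + 1)) →
          detW w0 fδ a (t + 1) = detW w0 fδ b (t + 1) →
          ∀ s, 1 ≤ s → s ≤ t + 1 → ∀ v, v ∈ a s → v ∉ b s → False := by
        intro a b ha hb hab s hs1 hs2 v hva hvb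
        obtain ⟨q, ⟨hle, h1, h0⟩, hSq⟩ := hT (t + 1) a ha s hs1 hs2 v hva (t + 1) (by omega)
        have va : μ[A q (t + 1) | histEvent I a (t + 1)] = 1 := h1 a hva ha
        have vb : μ[A q (t + 1) | histEvent I b (t + 1)] = 1 := by
          rw [← cstep b q hSq hb, ← hab, cstep a q hSq ha]
          exact va
        have hvb' : v ∈ Function.update b s (insert v (b s)) s := by simp
        have hupd : Function.update (Function.update b s (insert v (b s))) s
            ((Function.update b s (insert v (b s))) s \ {v}) = b := by
          funext x
          by_cases hx : x = s
          · subst hx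
            simp only [Function.update_self]
            rw [Finset.sdiff_singleton_eq_erase, Finset.erase_insert hvb]
          · rw [Function.update_of_ne hx, Function.update_of_ne hx]
        have hz := h0 (Function.update b s (insert v (b s))) hvb'
        rw [hupd] at hz
        rw [hz hb] at vb
        exact zero_ne_one vb
      rw [← Set.biUnion_of_singleton
        ({ω | wseq w0 fδ I (t + 1) ω = detW w0 fδ i (t + 1)} \ histEvent I i (t + 1))]
      refine (measure_biUnion_null_iff (Set.to_countable _)).2 ?_
      intro ω hω
      by_contra hne0
      have hωpos : 0 < μ {ω} := lt_of_le_of_ne zero_le (Ne.symm hne0)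
      obtain ⟨hωB, hωC⟩ := hω
      have hωj : ω ∈ histEvent I (fun s => I s ω) (t + 1) := fun s _ _ => rfl
      have hjpos : 0 < μ (histEvent I (fun s => I s ω) (t + 1)) :=
        lt_of_lt_of_le hωpos (measure_mono (Set.singleton_subset_iff.2 hωj))
      have hjw : wseq w0 fδ I (t + 1) ω = detW w0 fδ (fun s => I s ω) (t + 1) :=
        hist_subset_wseq' w0 fδ I _ (t + 1) ω hωj
      have hωB' : wseq w0 fδ I (t + 1) ω = detW w0 fδ i (t + 1) := hωB
      have hdetij : detW w0 fδ i (t + 1) = detW w0 fδ (fun s => I s ω) (t + 1) :=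
        hωB'.symm.trans hjw
      have hmis : ∃ s, 1 ≤ s ∧ s ≤ t + 1 ∧ I s ω ≠ i s := by
        by_contra hc
        apply hωC
        intro s h1 h2
        by_contra hne2
        exact hc ⟨s, h1, h2, hne2⟩
      obtain ⟨s, hs1, hs2, hnes⟩ := hmis
      have hvex : ∃ v, (v ∈ i s ∧ v ∉ I s ω) ∨ (v ∈ I s ω ∧ v ∉ i s) := by
        by_contra hc
        push_neg at hc
        apply hnes
        exact Finset.ext fun v => ⟨fun hv => (hc v).2 hv, fun hv => (hc v).1 hv⟩
      obtain ⟨v, hv⟩ := hvex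
      rcases hv with ⟨hv1, hv2⟩ | ⟨hv1, hv2⟩
      · exact contra i (fun s => I s ω) hi hjpos hdetij s hs1 hs2 v hv1 hv2
      · exact contra (fun s => I s ω) i hjpos hi hdetij.symm s hs1 hs2 v hv1 hv2
  intro t ht q hq i hi
  have h1 := key t i hi
  have h2 : histEvent I i t \ {ω | wseq w0 fδ I t ω = detW w0 fδ i t} = ∅ :=
    Set.diff_eq_empty.2 (fun ω hω => hist_subset_wseq' w0 fδ I i t ω hω)
  have haeq : ({ω | wseq w0 fδ I t ω = detW w0 fδ i t} : Set Ω)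
      =ᵐ[μ] (histEvent I i t : Set Ω) :=
    MeasureTheory.ae_eq_set.2 ⟨h1, by rw [h2]; exact measure_empty⟩
  rw [cond_congr_ae' μ haeq]
end

section
/- Inductive step of the thorough querying lemma: in the setting below, suppose the query sampling is thorough, the model (w_0, f̂_δ) is stepwise-optimal, and sequence-optimality holds for all times t ≤ n (i.e., for all t ≤ n, all q with S_{q,t} > 0, and all positive-probability histories i_{1..t}, μ(A_{q,t} | w_t = ŵ_t(i_{1..t})) = μ(A_{q,t} | I_{1..t} = i_{1..t})). Then sequence-optimality holds at time n + 1: for every query q with S_{q,n+1} > 0 and every instruction history i_{1..n+1} with μ(I_{1..n+1} = i_{1..n+1}) > 0, μ(A_{q,n+1} | w_{n+1} = ŵ_{n+1}(i_{1..n+1})) = μ(A_{q,n+1} | I_{1..n+1} = i_{1..n+1}), where ŵ_t(i_{1..t}) denotes the deterministic value of w_t along the history i_{1..t}. -/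
open MeasureTheory ProbabilityTheory

variable {Ω 𝓘 𝓠 𝓦 : Type*}

/-!
Stepwise optimality turns conditioning on `w_{n+1} = ŵ_{n+1}(i)` into conditioning on
`{w_n = ŵ_n(i)} ∩ {I_{n+1} = i_{n+1}}`, so it suffices that this event agrees almost surely with
the history event `{I_{1..n+1} = i_{1..n+1}}`. It does because, on atoms of positive mass, `w_n`
determines `I_{1..n}`: if an instruction `v` lies in `j_t` but not in `i_t`, thoroughness provides
a recall query for `v` at time `n`, whose answer has probability `1` given the history `j` and `0`
given `i`; by sequence-optimality at time `n` these are its probabilities given `ŵ_n(j)` and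
`ŵ_n(i)`, so the two world states differ.
-/

def SequenceOptimalAt [MeasurableSpace Ω] (μ : Measure Ω)
    (I : ℕ → Ω → Finset 𝓘) (A : 𝓠 → ℕ → Set Ω) (S : 𝓠 → ℕ → ℝ)
    (w0 : 𝓦) (fδ : 𝓦 → Finset 𝓘 → 𝓦) (t : ℕ) : Prop :=
  ∀ q : 𝓠, 0 < S q t → ∀ i : ℕ → Finset 𝓘, 0 < μ (histEvent I i t) →
    μ[A q t | {ω | wseq w0 fδ I t ω = detW w0 fδ i t}] = μ[A q t | histEvent I i t]

theorem ProbabilityTheory.cond_congr_set [MeasurableSpace Ω] (μ : Measure Ω) {s t : Set Ω}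
    (h : s =ᵐ[μ] t) : μ[|s] = μ[|t] := by
  simp only [ProbabilityTheory.cond, measure_congr h, Measure.restrict_congr_set h]

theorem histEvent_subset_of_le (I : ℕ → Ω → Finset 𝓘) (i : ℕ → Finset 𝓘) {m n : ℕ}
    (hmn : m ≤ n) : histEvent I i n ⊆ histEvent I i m :=
  fun _ hω t h1 h2 ↦ hω t h1 (h2.trans hmn)

theorem wseq_eq_detW_of_mem_histEvent (w0 : 𝓦) (fδ : 𝓦 → Finset 𝓘 → 𝓦)
    (I : ℕ → Ω → Finset 𝓘) (i : ℕ → Finset 𝓘) :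
    ∀ (n : ℕ) {ω : Ω}, ω ∈ histEvent I i n → wseq w0 fδ I n ω = detW w0 fδ i n
  | 0, _, _ => rfl
  | n + 1, ω, h => by
    simp only [wseq, detW]
    rw [wseq_eq_detW_of_mem_histEvent w0 fδ I i n (histEvent_subset_of_le I i n.le_succ h),
      h (n + 1) (Nat.le_add_left 1 n) le_rfl]

-- A history lacking `v` at time `t` is the one obtained by inserting `v` and removing it again.
theorem IsRecallQuery.cond_eq_zero_of_notMem [MeasurableSpace Ω] [DecidableEq 𝓘]
    {μ : Measure Ω} {I : ℕ → Ω → Finset 𝓘} {A : 𝓠 → ℕ → Set Ω} {q : 𝓠} {v : 𝓘} {t t' : ℕ}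
    (hq : IsRecallQuery μ I A q v t t') {i : ℕ → Finset 𝓘} (hv : v ∉ i t)
    (hi : 0 < μ (histEvent I i t')) : μ[A q t' | histEvent I i t'] = 0 := by
  have hupdate : Function.update (Function.update i t (insert v (i t))) t
      (Function.update i t (insert v (i t)) t \ {v}) = i := by
    simp [Finset.sdiff_singleton_eq_erase, Finset.erase_insert hv]
  have hforget := hq.2.2 (Function.update i t (insert v (i t))) (by simp)
  rw [hupdate] at hforget
  exact hforget hi

theorem histEvent_succ_subset (w0 : 𝓦) (fδ : 𝓦 → Finset 𝓘 → 𝓦) (I : ℕ → Ω → Finset 𝓘)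
    (i : ℕ → Finset 𝓘) (n : ℕ) :
    histEvent I i (n + 1) ⊆
      {ω | wseq w0 fδ I n ω = detW w0 fδ i n} ∩ {ω | I (n + 1) ω = i (n + 1)} :=
  fun _ hω ↦ ⟨wseq_eq_detW_of_mem_histEvent w0 fδ I i n
    (histEvent_subset_of_le I i n.le_succ hω), hω (n + 1) (Nat.le_add_left 1 n) le_rfl⟩

section Thorough

variable [MeasurableSpace Ω] [DecidableEq 𝓘] {μ : Measure Ω} {I : ℕ → Ω → Finset 𝓘}
  {A : 𝓠 → ℕ → Set Ω} {S : 𝓠 → ℕ → ℝ} {w0 : 𝓦} {fδ : 𝓦 → Finset 𝓘 → 𝓦} {n : ℕ}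

theorem subset_of_detW_eq (hT : Thorough μ I A S) (hopt : SequenceOptimalAt μ I A S w0 fδ n)
    {i j : ℕ → Finset 𝓘} (hi : 0 < μ (histEvent I i n)) (hj : 0 < μ (histEvent I j n))
    (hdet : detW w0 fδ j n = detW w0 fδ i n) {t : ℕ} (h1 : 1 ≤ t) (h2 : t ≤ n) :
    j t ⊆ i t := by
  intro v hvj
  by_contra hvi
  obtain ⟨q, hq, hSq⟩ := hT n j hj t h1 h2 v hvj n h2
  have hrecall : μ[A q n | histEvent I j n] = 1 := hq.2.1 j hvj hj
  have hforget : μ[A q n | histEvent I i n] = 0 := hq.cond_eq_zero_of_notMem hvi hi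
  rw [← hopt q hSq j hj, hdet, hopt q hSq i hi, hforget] at hrecall
  exact zero_ne_one hrecall

theorem eq_of_detW_eq (hT : Thorough μ I A S) (hopt : SequenceOptimalAt μ I A S w0 fδ n)
    {i j : ℕ → Finset 𝓘} (hi : 0 < μ (histEvent I i n)) (hj : 0 < μ (histEvent I j n))
    (hdet : detW w0 fδ j n = detW w0 fδ i n) {t : ℕ} (h1 : 1 ≤ t) (h2 : t ≤ n) :
    j t = i t :=
  (subset_of_detW_eq hT hopt hi hj hdet h1 h2).antisymm
    (subset_of_detW_eq hT hopt hj hi hdet.symm h1 h2)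

theorem mem_histEvent_succ_of_measure_singleton_ne_zero (hT : Thorough μ I A S)
    (hopt : 1 ≤ n → SequenceOptimalAt μ I A S w0 fδ n) {i : ℕ → Finset 𝓘}
    (hi : 0 < μ (histEvent I i n)) {ω : Ω} (hω : μ {ω} ≠ 0)
    (hw : wseq w0 fδ I n ω = detW w0 fδ i n) (hI : I (n + 1) ω = i (n + 1)) :
    ω ∈ histEvent I i (n + 1) := by
  have hωj : ∀ m, ω ∈ histEvent I (fun t ↦ I t ω) m := fun _ _ _ _ ↦ rfl
  have hj : 0 < μ (histEvent I (fun t ↦ I t ω) n) :=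
    (pos_iff_ne_zero.mpr hω).trans_le (measure_mono (Set.singleton_subset_iff.mpr (hωj n)))
  have hdet : detW w0 fδ (fun t ↦ I t ω) n = detW w0 fδ i n :=
    (wseq_eq_detW_of_mem_histEvent w0 fδ I _ n (hωj n)).symm.trans hw
  intro t h1 h2
  rcases Nat.le_succ_iff.mp h2 with h2 | rfl
  · exact eq_of_detW_eq hT (hopt (h1.trans h2)) hi hj hdet h1 h2
  · exact hI

theorem histEvent_succ_ae_eq [Countable Ω] (hT : Thorough μ I A S)
    (hopt : 1 ≤ n → SequenceOptimalAt μ I A S w0 fδ n) {i : ℕ → Finset 𝓘}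
    (hi : 0 < μ (histEvent I i n)) :
    ({ω | wseq w0 fδ I n ω = detW w0 fδ i n} ∩ {ω | I (n + 1) ω = i (n + 1)} : Set Ω)
      =ᵐ[μ] histEvent I i (n + 1) := by
  refine Filter.EventuallyLE.antisymm ?_ (histEvent_succ_subset w0 fδ I i n).eventuallyLE
  exact ae_iff_of_countable.mpr fun ω hω hB ↦
    mem_histEvent_succ_of_measure_singleton_ne_zero hT hopt hi hω hB.1 hB.2

end Thorough

theorem sequenceOptimal_inductive_step_general
    [Countable Ω] [MeasurableSpace Ω] [DecidableEq 𝓘] (μ : Measure Ω)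
    (I : ℕ → Ω → Finset 𝓘) (A : 𝓠 → ℕ → Set Ω) (S : 𝓠 → ℕ → ℝ)
    (w0 : 𝓦) (fδ : 𝓦 → Finset 𝓘 → 𝓦) (n : ℕ)
    (hT : Thorough μ I A S)
    (hS : StepwiseOptimal μ I A S w0 fδ)
    (hInd : ∀ t, 1 ≤ t → t ≤ n → ∀ q : 𝓠, 0 < S q t → ∀ i : ℕ → Finset 𝓘,
        0 < μ (histEvent I i t) →
        μ[A q t | {ω | wseq w0 fδ I t ω = detW w0 fδ i t}]
          = μ[A q t | histEvent I i t]) :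
    ∀ q : 𝓠, 0 < S q (n + 1) → ∀ i : ℕ → Finset 𝓘,
      0 < μ (histEvent I i (n + 1)) →
      μ[A q (n + 1) | {ω | wseq w0 fδ I (n + 1) ω = detW w0 fδ i (n + 1)}]
        = μ[A q (n + 1) | histEvent I i (n + 1)] := by
  intro q hSq i hpos
  have hposn : 0 < μ (histEvent I i n) :=
    hpos.trans_le (measure_mono (histEvent_subset_of_le I i n.le_succ))
  have hB := histEvent_succ_ae_eq hT (fun hn ↦ hInd n hn le_rfl) hposn
  calc μ[A q (n + 1) | {ω | wseq w0 fδ I (n + 1) ω = detW w0 fδ i (n + 1)}]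
      = μ[A q (n + 1) |
          {ω | wseq w0 fδ I n ω = detW w0 fδ i n} ∩ {ω | I (n + 1) ω = i (n + 1)}] :=
        hS n q hSq _ _ (hpos.trans_le (measure_mono (histEvent_succ_subset w0 fδ I i n)))
    _ = μ[A q (n + 1) | histEvent I i (n + 1)] := by rw [ProbabilityTheory.cond_congr_set μ hB]

/-- **Inductive step of the thorough querying lemma.** Suppose the query sampling is
thorough, the model `(w0, fδ)` is stepwise-optimal, and sequence-optimality holds for all
times `1 ≤ t ≤ n`. Then sequence-optimality holds at time `n + 1`. -/
theorem sequenceOptimal_inductive_step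
    [Countable Ω] [MeasurableSpace Ω] [MeasurableSingletonClass Ω]
    [Countable 𝓘] [DecidableEq 𝓘]
    (μ : Measure Ω) [IsProbabilityMeasure μ]
    (I : ℕ → Ω → Finset 𝓘) (A : 𝓠 → ℕ → Set Ω) (S : 𝓠 → ℕ → ℝ)
    (w0 : 𝓦) (fδ : 𝓦 → Finset 𝓘 → 𝓦) (n : ℕ)
    (hT : Thorough μ I A S)
    (hS : StepwiseOptimal μ I A S w0 fδ)
    (hInd : ∀ t, 1 ≤ t → t ≤ n → ∀ q : 𝓠, 0 < S q t → ∀ i : ℕ → Finset 𝓘,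
        0 < μ (histEvent I i t) →
        μ[A q t | {ω | wseq w0 fδ I t ω = detW w0 fδ i t}]
          = μ[A q t | histEvent I i t]) :
    ∀ q : 𝓠, 0 < S q (n + 1) → ∀ i : ℕ → Finset 𝓘,
      0 < μ (histEvent I i (n + 1)) →
      μ[A q (n + 1) | {ω | wseq w0 fδ I (n + 1) ω = detW w0 fδ i (n + 1)}]
        = μ[A q (n + 1) | histEvent I i (n + 1)] :=
  sequenceOptimal_inductive_step_general μ I A S w0 fδ n hT hS hInd
end

section
/- Recall queries make past instructions recoverable from the world state: in the setting below, suppose sequence-optimality holds at time n (i.e., for all queries q with S_{q,n} > 0 and all positive-probability histories j_{1..n}, μ(A_{q,n} | w_n = ŵ_n(j_{1..n})) = μ(A_{q,n} | I_{1..n} = j_{1..n})). Let i_{1..n} be an instruction history with μ(I_{1..n} = i_{1..n}) > 0, let t ≤ n and v ∈ i_t, and suppose there exists a recall query q' for v at times (t, n) with S_{q',n} > 0. Then μ({v ∈ I_t} | w_n = ŵ_n(i_{1..n})) = 1, where ŵ_n(i_{1..n}) denotes the deterministic value of w_n along the history i_{1..n}. -/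
open MeasureTheory ProbabilityTheory

variable {Ω 𝓘 𝓠 𝓦 : Type*}

lemma wseq_eq_detW_of_histEvent (w0 : 𝓦) (fδ : 𝓦 → Finset 𝓘 → 𝓦)
    (I : ℕ → Ω → Finset 𝓘) (i : ℕ → Finset 𝓘) (n : ℕ) {ω : Ω}
    (hω : ω ∈ histEvent I i n) :
    ∀ m, m ≤ n → wseq w0 fδ I m ω = detW w0 fδ i m := by
  intro m
  induction m with
  | zero => intro _; rfl
  | succ k ih =>
    intro hk
    have hk' : k ≤ n := Nat.le_of_succ_le hk
    have hI : I (k + 1) ω = i (k + 1) := hω (k + 1) (Nat.succ_le_succ (Nat.zero_le _)) hk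
    simp [wseq, detW, ih hk', hI]

/-- **Recall queries make past instructions recoverable from the world state.** Suppose
sequence-optimality holds at time `n`. Let `i_{1..n}` be a positive-probability
instruction history, let `1 ≤ t ≤ n` and `v ∈ i_t`, and suppose there exists a recall
query `q'` for `v` at times `(t, n)` with positive sampling probability. Then
`μ({v ∈ I_t} | w_n = ŵ_n(i_{1..n})) = 1`. -/
theorem instruction_recoverable_from_world_state
    [Countable Ω] [MeasurableSpace Ω] [MeasurableSingletonClass Ω]
    [Countable 𝓘] [DecidableEq 𝓘]
    (μ : Measure Ω) [IsProbabilityMeasure μ]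
    (I : ℕ → Ω → Finset 𝓘) (A : 𝓠 → ℕ → Set Ω) (S : 𝓠 → ℕ → ℝ)
    (w0 : 𝓦) (fδ : 𝓦 → Finset 𝓘 → 𝓦) (n : ℕ)
    (hSeq : ∀ q : 𝓠, 0 < S q n → ∀ j : ℕ → Finset 𝓘,
        0 < μ (histEvent I j n) →
        μ[A q n | {ω | wseq w0 fδ I n ω = detW w0 fδ j n}]
          = μ[A q n | histEvent I j n])
    (i : ℕ → Finset 𝓘) (hi : 0 < μ (histEvent I i n))
    (t : ℕ) (ht1 : 1 ≤ t) (htn : t ≤ n)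
    (v : 𝓘) (hv : v ∈ i t)
    (q' : 𝓠) (hq' : IsRecallQuery μ I A q' v t n) (hSq' : 0 < S q' n) :
    μ[{ω | v ∈ I t ω} | {ω | wseq w0 fδ I n ω = detW w0 fδ i n}] = 1 := by
  have meas : ∀ s : Set Ω, MeasurableSet s := fun s => s.to_countable.measurableSet
  set W : Set Ω := {ω | wseq w0 fδ I n ω = detW w0 fδ i n} with hWdef
  -- the history event is contained in W
  have hsub : histEvent I i n ⊆ W := fun ω hω =>
    wseq_eq_detW_of_histEvent w0 fδ I i n hω n le_rfl
  have hWpos : 0 < μ W := lt_of_lt_of_le hi (measure_mono hsub)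
  have hWne : μ W ≠ 0 := hWpos.ne'
  have hWtop : μ W ≠ ⊤ := measure_ne_top μ W
  -- A q' n ∩ {v ∉ I t} is null
  have hnull : μ (A q' n ∩ {ω | v ∉ I t ω}) = 0 := by
    set s : Set Ω := A q' n ∩ {ω | v ∉ I t ω} with hsdef
    have : s = ⋃ ω ∈ s, {ω} := by simp
    rw [this, measure_biUnion_null_iff s.to_countable]
    intro ω hω
    by_contra hμω
    have hμωpos : 0 < μ {ω} := pos_iff_ne_zero.mpr hμω
    obtain ⟨hωA, hωv⟩ := hω
    -- build the augmented history
    set j : ℕ → Finset 𝓘 := Function.update (fun s => I s ω) t (I t ω ∪ {v}) with hjdef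
    have hjt : j t = I t ω ∪ {v} := Function.update_self _ _ _
    have hvj : v ∈ j t := by rw [hjt]; simp
    have hdiff : (I t ω ∪ {v}) \ {v} = I t ω := by
      ext a
      simp only [Finset.mem_sdiff, Finset.mem_union, Finset.mem_singleton]
      constructor
      · rintro ⟨h | h, hne⟩
        · exact h
        · exact absurd h hne
      · exact fun ha => ⟨Or.inl ha, fun hav => hωv (hav ▸ ha)⟩
    have hupd : Function.update j t (j t \ {v}) = fun s => I s ω := by
      funext s'
      by_cases hs : s' = t
      · subst hs
        rw [Function.update_self, hjt]; exact hdiff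
      · simp [hjdef, Function.update_of_ne hs]
    have hωE : ω ∈ histEvent I (Function.update j t (j t \ {v})) n := by
      rw [hupd]; intro s _ _; rfl
    have hEpos : 0 < μ (histEvent I (Function.update j t (j t \ {v})) n) :=
      lt_of_lt_of_le hμωpos (measure_mono (Set.singleton_subset_iff.mpr hωE))
    have h0 := hq'.2.2 j hvj hEpos
    rw [cond_apply (meas _)] at h0
    have hEne : μ (histEvent I (Function.update j t (j t \ {v})) n) ≠ 0 := hEpos.ne'
    have : μ (histEvent I (Function.update j t (j t \ {v})) n ∩ A q' n) = 0 := by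
      rcases mul_eq_zero.mp h0 with h | h
      · exact absurd h (by simp [hEne, measure_ne_top])
      · exact h
    have hωmem : ω ∈ histEvent I (Function.update j t (j t \ {v})) n ∩ A q' n := ⟨hωE, hωA⟩
    have := measure_mono_null (Set.singleton_subset_iff.mpr hωmem) this
    exact hμω this
  -- conditional probability of A given W is 1
  have h1 : μ[A q' n | W] = 1 := by
    rw [hSeq q' hSq' i hi]
    exact hq'.2.1 i hv hi
  rw [cond_apply (meas _)] at h1
  have hWA : μ (W ∩ A q' n) = μ W := by
    have hle : μ (W ∩ A q' n) ≤ μ W := measure_mono Set.inter_subset_left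
    by_contra hne
    have hlt : μ (W ∩ A q' n) < μ W := lt_of_le_of_ne hle hne
    have : (μ W)⁻¹ * μ (W ∩ A q' n) < (μ W)⁻¹ * μ W :=
      ENNReal.mul_lt_mul_right (by simp [hWtop]) (ENNReal.inv_ne_top.mpr hWne) hlt
    rw [ENNReal.inv_mul_cancel hWne hWtop, h1] at this
    exact lt_irrefl _ this
  -- W ∩ {v ∈ I t} has full measure in W
  have hWv : μ (W ∩ {ω | v ∈ I t ω}) = μ W := by
    have hle : μ (W ∩ {ω | v ∈ I t ω}) ≤ μ W := measure_mono Set.inter_subset_left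
    have hge : μ W ≤ μ (W ∩ {ω | v ∈ I t ω}) := by
      calc μ W = μ (W ∩ A q' n) := hWA.symm
        _ ≤ μ ((W ∩ {ω | v ∈ I t ω}) ∪ (A q' n ∩ {ω | v ∉ I t ω})) := by
            apply measure_mono
            rintro ω ⟨hωW, hωA⟩
            by_cases hvω : v ∈ I t ω
            · exact Or.inl ⟨hωW, hvω⟩
            · exact Or.inr ⟨hωA, hvω⟩
        _ ≤ μ (W ∩ {ω | v ∈ I t ω}) + μ (A q' n ∩ {ω | v ∉ I t ω}) := measure_union_le _ _
        _ = μ (W ∩ {ω | v ∈ I t ω}) := by rw [hnull, add_zero]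
    exact le_antisymm hle hge
  rw [cond_apply (meas _), hWv, ENNReal.inv_mul_cancel hWne hWtop]
end
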